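/- Let q and k be positive integers with q ≥ 2 and k ≥ 2, and let G be a chordal graph of order n = q(k+1), minimum degree k, and size q·binomial(k+1,2). Then G is isomorphic to the disjoint union of q copies of the complete graph K_{k+1}; in particular, every connected component of G is a complete graph on k+1 vertices and G is disconnected. -/

import Mathlib

open scoped Classical

/-- A graph is chordal if every cycle of length greater than three has a chord, i.e.,
an edge joining two vertices of the cycle that is not itself an edge of the cycle. -/
def SimpleGraph.IsChordal {V : Type*} (G : SimpleGraph V) : Prop :=
  ∀ ⦃v : V⦄ (w : G.Walk v v), w.IsCycle → 3 < w.length →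
    ∃ a b : V, G.Adj a b ∧ a ∈ w.support ∧ b ∈ w.support ∧ s(a, b) ∉ w.edges

/-- The disjoint union `q K_s` of `q` pairwise vertex-disjoint copies of the complete graph
`K_s`: two vertices are adjacent iff they are distinct and lie in the same copy. -/
def copiesOfComplete (q s : ℕ) : SimpleGraph (Fin q × Fin s) where
  Adj x y := x.1 = y.1 ∧ x ≠ y
  symm := ⟨fun _ _ h => ⟨h.1.symm, h.2.symm⟩⟩
  loopless := ⟨fun _ h => h.2 rfl⟩

/-!
A vertex is simplicial when its neighbourhood is a clique. Dirac's lemma provides one in every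
component of a chordal graph: a non-complete chordal graph has a clique separator `N`, and
induction on the two sides of `N` yields a simplicial vertex outside any prescribed clique.

Counting degrees, minimum degree `k` and `q * C(k+1, 2)` edges on `q * (k+1)` vertices force
`G` to be `k`-regular. If `w` is simplicial and `u ~ w`, then `N[w] ⊆ N[u]` and both have
`k + 1` elements, so `N[w]` is closed under adjacency: it is the whole component of `w`, a copy
of `K_{k+1}`. Counting vertices, there are `q` components.
-/

namespace SimpleGraph

variable {V : Type*} {G : SimpleGraph V}

namespace Walk

theorem exists_length_lt_of_isChord {u v : V} {e : Sym2 V} (p : G.Walk u v) (hc : p.IsChord e) :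
    ∃ q : G.Walk u v, q.length < p.length ∧ q.support ⊆ p.support := by
  induction e using Sym2.ind with | _ x y => ?_
  induction p with
  | nil =>
    obtain ⟨hxy, -, hx, hy⟩ := isChord_sym2Mk.mp hc
    simp only [support_nil, List.mem_singleton] at hx hy
    exact absurd hxy (hx ▸ hy ▸ G.irrefl)
  | @cons u w v huw p ih =>
    obtain ⟨hxy, hne, hx, hy⟩ := isChord_sym2Mk.mp hc
    simp only [edges_cons, List.mem_cons, not_or] at hne
    simp only [support_cons, List.mem_cons] at hx hy
    have shortcut : ∀ z ∈ p.support, G.Adj u z → z ≠ w →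
        ∃ q : G.Walk u v,
          q.length < (cons huw p).length ∧ q.support ⊆ (cons huw p).support := by
      intro z hz huz hzw
      refine ⟨cons huz (p.dropUntil z hz), ?_, ?_⟩
      · have hsplit := congrArg length (p.take_spec hz)
        have htake := not_nil_iff_lt_length.mp (mt (nil_takeUntil p hz).mp (Ne.symm hzw))
        rw [length_append] at hsplit
        simp only [length_cons]
        omega
      · simpa using List.cons_subset_cons u (p.support_dropUntil_subset_support hz)
    rcases hx with rfl | hx <;> rcases hy with rfl | hy
    · exact absurd hxy G.irrefl
    · exact shortcut y hy hxy (by rintro rfl; exact hne.1 rfl)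
    · exact shortcut x hx hxy.symm (by rintro rfl; exact hne.1 Sym2.eq_swap)
    · obtain ⟨q, hq, hsub⟩ := ih (isChord_sym2Mk.mpr ⟨hxy, hne.2, hx, hy⟩)
      exact ⟨cons huw q, by simpa using hq, by simpa using List.cons_subset_cons u hsub⟩

theorem exists_isPath_isChordless_support_subset {u v : V} (p : G.Walk u v) :
    ∃ q : G.Walk u v, q.IsPath ∧ q.IsChordless ∧ q.support ⊆ p.support := by
  induction hn : p.length using Nat.strong_induction_on generalizing p with
  | _ n ih =>
  by_cases hchordless : p.bypass.IsChordless
  · exact ⟨p.bypass, p.bypass_isPath, hchordless, p.support_bypass_subset_support⟩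
  obtain ⟨e, he⟩ : ∃ e, p.bypass.IsChord e := by simpa [IsChordless] using hchordless
  obtain ⟨r, hr, hrsub⟩ := p.bypass.exists_length_lt_of_isChord he
  obtain ⟨q, hq, hqc, hqsub⟩ :=
    ih r.length (hn ▸ hr.trans_le p.length_bypass_le_length) r rfl
  exact ⟨q, hq, hqc, fun x hx => p.support_bypass_subset_support (hrsub (hqsub hx))⟩

end Walk

open Walk

theorem IsChordal.comap {W : Type*} {H : SimpleGraph W} (f : H ↪g G) (hG : G.IsChordal) :
    H.IsChordal := by
  intro v w hw hlen
  obtain ⟨x, y, hxy, hx, hy, hxyw⟩ :=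
    hG (w.map f.toHom) (hw.map f.injective) (by rwa [length_map])
  rw [Walk.support_map, List.mem_map] at hx hy
  obtain ⟨x, hx, rfl⟩ := hx
  obtain ⟨y, hy, rfl⟩ := hy
  refine ⟨x, y, f.map_adj_iff.mp hxy, hx, hy, fun he => hxyw ?_⟩
  rw [Walk.edges_map, List.mem_map]
  exact ⟨s(x, y), he, rfl⟩

/-- The shortest chordless `s`-`t` path inside `p` closes up through `a` into a cycle of length
at least four that can have no chord. -/
theorem IsChordal.adj_of_walk (hG : G.IsChordal) {a s t : V} (has : G.Adj a s) (hat : G.Adj a t)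
    (hst : s ≠ t) (p : G.Walk s t) (hpa : a ∉ p.support)
    (hp : ∀ x ∈ p.support, G.Adj a x → x = s ∨ x = t) : G.Adj s t := by
  by_contra hnst
  obtain ⟨q, hq, hqc, hqp⟩ := p.exists_isPath_isChordless_support_subset
  have hqa : a ∉ q.support := fun h => hpa (hqp h)
  have hlen : 2 ≤ q.length := by
    have h0 : q.length ≠ 0 := fun h => hst (eq_of_length_eq_zero h)
    have h1 : q.length ≠ 1 := fun h => hnst (adj_of_length_eq_one h)
    omega
  set c : G.Walk a a := cons has (q.concat hat.symm)
  have hc : c.IsCycle := by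
    refine (cons_isCycle_iff _ _).mpr ⟨hq.concat hqa _, fun h => ?_⟩
    rw [edges_concat, List.concat_eq_append, List.mem_append, List.mem_singleton] at h
    rcases h with h | h
    · exact hqa (fst_mem_support_of_mem_edges q h)
    · exact hst (Sym2.congr_right.mp (h.trans Sym2.eq_swap))
  obtain ⟨x, y, hxy, hx, hy, hxyc⟩ :=
    hG c hc (by simp only [c, length_cons, length_concat]; omega)
  have hsupp : ∀ z ∈ c.support, z = a ∨ z ∈ q.support := by
    simp only [c, support_cons, support_concat, List.mem_cons, List.mem_append]
    tauto
  have hedge : ∀ z ∈ q.support, G.Adj a z → s(a, z) ∈ c.edges := by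
    intro z hz haz
    rcases hp z (hqp hz) haz with rfl | rfl <;> simp [c, edges_concat, Sym2.eq_swap]
  rcases hsupp x hx with rfl | hxq <;> rcases hsupp y hy with rfl | hyq
  · exact G.irrefl hxy
  · exact hxyc (hedge y hyq hxy)
  · exact hxyc (Sym2.eq_swap ▸ hedge x hxq hxy.symm)
  · exact hxyc (by simp [c, edges_concat, hqc.mem_edges hxq hyq hxy])

/-- `C` is the component of `b` in `G - N[a]` and `N` its neighbourhood, which lies in `N(a)`. -/
theorem IsChordal.exists_isClique_separator (hG : G.IsChordal) {a b : V} (hab : a ≠ b)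
    (hnab : ¬ G.Adj a b) :
    ∃ C N : Set V, G.IsClique N ∧ Disjoint C N ∧ b ∈ C ∧ a ∉ C ∪ N ∧
      ∀ c ∈ C, G.neighborSet c ⊆ C ∪ N := by
  set C : Set V := {v | ∃ p : G.Walk b v, ∀ x ∈ p.support, x ≠ a ∧ ¬ G.Adj a x}
  set N : Set V := {s | s ∉ C ∧ ∃ c ∈ C, G.Adj c s}
  have hCa : ∀ c ∈ C, c ≠ a ∧ ¬ G.Adj a c := fun c ⟨p, hp⟩ => hp c p.end_mem_support
  have hNa : ∀ s ∈ N, G.Adj a s := by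
    rintro s ⟨hsC, c, ⟨p, hp⟩, hcs⟩
    by_contra has
    have hsa : s ≠ a := by
      rintro rfl
      exact (hCa c ⟨p, hp⟩).2 hcs.symm
    refine hsC ⟨p.concat hcs, fun x hx => ?_⟩
    rw [support_concat, List.mem_append, List.mem_singleton] at hx
    rcases hx with hx | rfl
    exacts [hp x hx, ⟨hsa, has⟩]
  have hN : G.IsClique N := by
    intro s hs t ht hst
    have has := hNa s hs
    have hat := hNa t ht
    obtain ⟨-, c, ⟨p, hp⟩, hcs⟩ := hs
    obtain ⟨-, d, ⟨r, hr⟩, hdt⟩ := ht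
    have hmid : ∀ x ∈ (p.reverse.append r).support, x ≠ a ∧ ¬ G.Adj a x := by
      intro x hx
      rw [mem_support_append_iff, support_reverse, List.mem_reverse] at hx
      exact hx.elim (hp x) (hr x)
    refine hG.adj_of_walk has hat hst
      (cons hcs.symm ((p.reverse.append r).concat hdt)) ?_ fun x hx hax => ?_
    · rw [support_cons, support_concat, List.mem_cons, List.mem_append, List.mem_singleton]
      simp only [not_or]
      exact ⟨has.ne, fun h => (hmid a h).1 rfl, hat.ne⟩
    · rw [support_cons, support_concat, List.mem_cons, List.mem_append,
        List.mem_singleton] at hx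
      rcases hx with rfl | hx | rfl
      exacts [.inl rfl, ((hmid x hx).2 hax).elim, .inr rfl]
  refine ⟨C, N, hN, Set.disjoint_left.mpr fun v hv hvN => hvN.1 hv,
    ⟨nil, by simpa [eq_comm] using ⟨hab, hnab⟩⟩, ?_, fun c hc v hcv => ?_⟩
  · rintro (haC | ⟨-, c, hc, hca⟩)
    exacts [(hCa a haC).1 rfl, (hCa c hc).2 hca.symm]
  · by_cases hvC : v ∈ C
    exacts [.inl hvC, .inr ⟨hvC, c, hc, hcv⟩]

theorem isClique_neighborSet_of_induce {s : Set V} {v : s} (hv : G.neighborSet v ⊆ s)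
    (h : (G.induce s).IsClique ((G.induce s).neighborSet v)) : G.IsClique (G.neighborSet v) :=
  fun x hx y hy hxy =>
    h (x := ⟨x, hv hx⟩) hx (y := ⟨y, hv hy⟩) hy fun e => hxy (congrArg Subtype.val e)

theorem IsChordal.exists_isClique_neighborSet_notMem [Finite V] (hG : G.IsChordal) {Y : Set V}
    (hY : G.IsClique Y) {v : V} (hv : v ∉ Y) : ∃ z ∉ Y, G.IsClique (G.neighborSet z) := by
  induction hn : Nat.card V using Nat.strong_induction_on generalizing V with
  | _ n ih =>
  by_cases htop : G.IsClique Set.univ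
  · exact ⟨v, hv, htop.subset (Set.subset_univ _)⟩
  obtain ⟨a, b, hab, hnab⟩ : ∃ a b, a ≠ b ∧ ¬ G.Adj a b := by
    simpa [IsClique, Set.Pairwise] using htop
  obtain ⟨C, N, hN, hCN, hbC, haCN, hCnbr⟩ := hG.exists_isClique_separator hab hnab
  have exists_simplicial_in : ∀ X : Set V, (∀ x ∈ X, G.neighborSet x ⊆ X ∪ N) →
      ∀ x ∈ X, x ∉ N → ∀ w ∉ X ∪ N, ∃ z ∈ X, G.IsClique (G.neighborSet z) := by
    intro X hX x hxX hxN w hw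
    obtain ⟨z, hzN, hz⟩ :=
      ih _ (hn ▸ Finite.card_subtype_lt hw) (hG.comap (Embedding.induce _))
        (Y := {u | (u : V) ∈ N}) (fun u hu u' hu' huu' => hN hu hu' fun e => huu' (Subtype.ext e))
        (v := ⟨x, .inl hxX⟩) hxN rfl
    have hzX : (z : V) ∈ X := z.2.resolve_right hzN
    exact ⟨z, hzX, isClique_neighborSet_of_induce (hX z hzX) hz⟩
  obtain ⟨zC, hzC, hzC_simp⟩ :=
    exists_simplicial_in C hCnbr b hbC (hCN.notMem_of_mem_left hbC) a haCN
  -- the clique `Y` cannot meet both `C` and `(C ∪ N)ᶜ`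
  by_cases hzCY : zC ∉ Y
  · exact ⟨zC, hzCY, hzC_simp⟩
  have hD : ∀ x ∈ (C ∪ N)ᶜ, G.neighborSet x ⊆ (C ∪ N)ᶜ ∪ N := by
    intro x hx y hxy
    by_cases hyC : y ∈ C
    · exact (hx (hCnbr y hyC hxy.symm)).elim
    · by_cases hyN : y ∈ N
      exacts [.inr hyN, .inl fun h => h.elim hyC hyN]
  obtain ⟨zD, hzD, hzD_simp⟩ := exists_simplicial_in _ hD a haCN (fun h => haCN (.inr h)) b
    fun h => h.elim (fun h => h (.inl hbC)) (hCN.notMem_of_mem_left hbC)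
  refine ⟨zD, fun hzDY => hzD (hCnbr zC hzC (hY (not_not.mp hzCY) hzDY ?_)), hzD_simp⟩
  rintro rfl
  exact hzD (.inl hzC)

theorem IsChordal.exists_isClique_neighborSet_mem_supp [Finite V] (hG : G.IsChordal)
    (c : G.ConnectedComponent) : ∃ w ∈ c.supp, G.IsClique (G.neighborSet w) := by
  obtain ⟨v, hv⟩ := c.nonempty_supp
  obtain ⟨w, -, hw⟩ := (hG.comap (Embedding.induce c.supp)).exists_isClique_neighborSet_notMem
    isClique_empty (v := ⟨v, hv⟩) (Set.notMem_empty _)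
  exact ⟨w, w.2,
    isClique_neighborSet_of_induce (fun _ hx => c.mem_supp_of_adj_mem_supp w.2 hx) hw⟩

theorem Reachable.mem_of_forall_adj_mem {s : Set V} (hs : ∀ x ∈ s, ∀ y, G.Adj x y → y ∈ s)
    {u v : V} (huv : G.Reachable u v) (hu : u ∈ s) : v ∈ s := by
  obtain ⟨p⟩ := huv
  induction p with
  | nil => exact hu
  | cons h _ ih => exact ih (hs _ hu _ h)

section Degree

variable [Fintype V] [DecidableRel G.Adj]

theorem isRegularOfDegree_of_le_degree {k : ℕ} (hle : ∀ v, k ≤ G.degree v)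
    (hsum : 2 * G.edgeFinset.card = Fintype.card V * k) : G.IsRegularOfDegree k := by
  have h : ∑ v, G.degree v = ∑ _v : V, k := by
    rw [sum_degrees_eq_twice_card_edges, hsum, Finset.sum_const, Finset.card_univ, smul_eq_mul]
  exact fun v => ((Finset.sum_eq_sum_iff_of_le fun v _ => hle v).mp h.symm v
    (Finset.mem_univ v)).symm

theorem insert_neighborFinset_eq_of_isClique {w u : V} (hw : G.IsClique (G.neighborSet w))
    (hwu : G.Adj w u) (hdeg : G.degree u ≤ G.degree w) :
    insert u (G.neighborFinset u) = insert w (G.neighborFinset w) := by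
  symm
  refine Finset.eq_of_subset_of_card_le (fun x hx => ?_) ?_
  · simp only [Finset.mem_insert, mem_neighborFinset] at hx ⊢
    rcases hx with rfl | hx
    · exact .inr hwu.symm
    · by_cases hxu : x = u
      exacts [.inl hxu, .inr (hw hwu hx (Ne.symm hxu))]
  · rw [Finset.card_insert_of_notMem (G.notMem_neighborFinset_self u),
      Finset.card_insert_of_notMem (G.notMem_neighborFinset_self w),
      card_neighborFinset_eq_degree, card_neighborFinset_eq_degree]
    omega

theorem supp_connectedComponentMk_eq_insert_neighborFinset {k : ℕ} (hreg : G.IsRegularOfDegree k)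
    {w : V} (hw : G.IsClique (G.neighborSet w)) :
    (G.connectedComponentMk w).supp = ↑(insert w (G.neighborFinset w)) := by
  have hclosed : ∀ x ∈ (↑(insert w (G.neighborFinset w)) : Set V), ∀ y, G.Adj x y →
      y ∈ (↑(insert w (G.neighborFinset w)) : Set V) := by
    intro x hx y hxy
    rcases Finset.mem_insert.mp hx with rfl | hx
    · exact Finset.mem_insert_of_mem ((mem_neighborFinset _ _ _).mpr hxy)
    · rw [Finset.mem_coe, ← insert_neighborFinset_eq_of_isClique hw
        ((mem_neighborFinset _ _ _).mp hx) (by rw [hreg.degree_eq, hreg.degree_eq])]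
      exact Finset.mem_insert_of_mem ((mem_neighborFinset _ _ _).mpr hxy)
  ext v
  rw [ConnectedComponent.mem_supp_iff, ConnectedComponent.eq]
  refine ⟨fun h => h.symm.mem_of_forall_adj_mem hclosed (Finset.mem_insert_self w _),
    fun h => ?_⟩
  rcases Finset.mem_insert.mp h with rfl | h
  exacts [Reachable.refl v, ((mem_neighborFinset _ _ _).mp h).symm.reachable]

theorem IsChordal.isClique_supp_of_isRegularOfDegree (hG : G.IsChordal) {k : ℕ}
    (hreg : G.IsRegularOfDegree k) (c : G.ConnectedComponent) :
    G.IsClique c.supp ∧ c.supp.ncard = k + 1 := by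
  obtain ⟨w, hwc, hw⟩ := hG.exists_isClique_neighborSet_mem_supp c
  rw [← (ConnectedComponent.mem_supp_iff c w).mp hwc,
    supp_connectedComponentMk_eq_insert_neighborFinset hreg hw, Set.ncard_coe_finset,
    Finset.card_insert_of_notMem (G.notMem_neighborFinset_self w), card_neighborFinset_eq_degree,
    hreg.degree_eq, Finset.coe_insert, coe_neighborFinset, isClique_insert]
  exact ⟨⟨hw, fun u hu _ => hu⟩, rfl⟩

end Degree

theorem adj_iff_connectedComponentMk_eq
    (hclique : ∀ c : G.ConnectedComponent, G.IsClique c.supp)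
    {x y : V} : G.Adj x y ↔ G.connectedComponentMk x = G.connectedComponentMk y ∧ x ≠ y :=
  ⟨fun h => ⟨ConnectedComponent.connectedComponentMk_eq_of_adj h, h.ne⟩,
    fun ⟨h, hne⟩ => hclique (G.connectedComponentMk y) h rfl hne⟩

theorem nonempty_iso_copiesOfComplete [Finite V] {s : ℕ}
    (hclique : ∀ c : G.ConnectedComponent, G.IsClique c.supp)
    (hcard : ∀ c : G.ConnectedComponent, c.supp.ncard = s) :
    Nonempty (G ≃g copiesOfComplete (Nat.card G.ConnectedComponent) s) := by
  let e : V ≃ Fin (Nat.card G.ConnectedComponent) × Fin s :=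
    (Equiv.sigmaFiberEquiv G.connectedComponentMk).symm.trans
      ((Equiv.sigmaCongrRight fun c : G.ConnectedComponent =>
        (Finite.equivFin c.supp).trans (finCongr ((Nat.card_coe_set_eq _).trans (hcard c)))).trans
        ((Equiv.sigmaEquivProd _ _).trans
          (Equiv.prodCongr (Finite.equivFin _) (Equiv.refl _))))
  refine ⟨⟨e, fun {x y} => ?_⟩⟩
  change (e x).1 = (e y).1 ∧ e x ≠ e y ↔ G.Adj x y
  rw [adj_iff_connectedComponentMk_eq hclique, e.injective.ne_iff]
  exact and_congr_left' (Finite.equivFin _).injective.eq_iff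

end SimpleGraph

theorem stmt_11_general (q k : ℕ) (hq : 2 ≤ q)
    {V : Type*} [Fintype V] (G : SimpleGraph V)
    (hcard : Fintype.card V = q * (k + 1))
    (hchordal : G.IsChordal) (hmin : G.minDegree = k)
    (hsize : G.edgeFinset.card = q * Nat.choose (k + 1) 2) :
    Nonempty (G ≃g copiesOfComplete q (k + 1)) ∧
    (∀ c : G.ConnectedComponent, c.supp.ncard = k + 1 ∧
      ∀ x ∈ c.supp, ∀ y ∈ c.supp, x ≠ y → G.Adj x y) ∧
    ¬ G.Connected := by
  have hreg : G.IsRegularOfDegree k := by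
    refine SimpleGraph.isRegularOfDegree_of_le_degree (fun v => hmin ▸ G.minDegree_le_degree v) ?_
    have h := Nat.add_one_mul_choose_eq k 1
    rw [Nat.choose_one_right] at h
    calc 2 * G.edgeFinset.card = q * ((k + 1).choose 2 * 2) := by rw [hsize]; ring
      _ = Fintype.card V * k := by rw [← h, hcard]; ring
  have hcomp := hchordal.isClique_supp_of_isRegularOfDegree hreg
  obtain ⟨e⟩ :=
    SimpleGraph.nonempty_iso_copiesOfComplete (fun c => (hcomp c).1) (fun c => (hcomp c).2)
  obtain rfl : Nat.card G.ConnectedComponent = q := by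
    have h := Nat.card_congr e.toEquiv
    rw [Nat.card_eq_fintype_card, hcard, Nat.card_prod, Nat.card_fin, Nat.card_fin] at h
    exact (Nat.eq_of_mul_eq_mul_right k.succ_pos h).symm
  refine ⟨⟨e⟩, fun c => ⟨(hcomp c).2, (hcomp c).1⟩, fun hconn => ?_⟩
  have h := Finite.card_le_one_iff_subsingleton.mpr
    hconn.preconnected.subsingleton_connectedComponent
  omega

/-- For `q ≥ 2` and `k ≥ 2`, every chordal graph of order `q * (k+1)`, minimum degree `k`,
and size `q * C(k+1, 2)` is isomorphic to `q K_{k+1}`; in particular every connected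
component is a complete graph on `k + 1` vertices and the graph is disconnected. -/
theorem stmt_11 (q k : ℕ) (hq : 2 ≤ q) (hk : 2 ≤ k)
    {V : Type*} [Fintype V] (G : SimpleGraph V)
    (hcard : Fintype.card V = q * (k + 1))
    (hchordal : G.IsChordal) (hmin : G.minDegree = k)
    (hsize : G.edgeFinset.card = q * Nat.choose (k + 1) 2) :
    Nonempty (G ≃g copiesOfComplete q (k + 1)) ∧
    (∀ c : G.ConnectedComponent, c.supp.ncard = k + 1 ∧
      ∀ x ∈ c.supp, ∀ y ∈ c.supp, x ≠ y → G.Adj x y) ∧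
    ¬ G.Connected :=
  stmt_11_general q k hq G hcard hchordal hmin hsize
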